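/- Let C be a linear code of length n over R with component codes C_1, C_2, C_3, C_4, and let 0 ≤ l ≤ e−1. Then C is l-Galois self-dual (C = C^{⊥_l}) if and only if C_i = C_i^{⊥_l} for every i = 1,2,3,4. -/

import Mathlib

/-
Since `R ≅ F_q^4`, a linear code `C` is the product of its component codes
(multiplying by the idempotent `γ_i` isolates the `i`-th component inside `C`), and the
`l`-Galois inner product over `R` is computed componentwise, so `C^{⊥_l}` is the product
of the `C_i^{⊥_l}`. Two products of codes agree iff their factors do.
-/

open scoped BigOperators

/-- The ring `R = F_q + uF_q + vF_q + uvF_q ≅ F_q^4` (componentwise operations). -/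
abbrev RR (F : Type*) := Fin 4 → F

/-- The pairwise orthogonal idempotents `γ_1, γ_2, γ_3, γ_4` of `R`,
realized as the standard idempotents of `F_q^4`. -/
def gam (F : Type*) [Field F] (i : Fin 4) : RR F := Pi.single i 1

/-- The `i`-th component code `C_i ⊆ F_q^n` of a code `C ⊆ R^n`. -/
def compCode {F : Type*} [Field F] {n : ℕ} (C : Set (Fin n → RR F)) (i : Fin 4) :
    Set (Fin n → F) :=
  {x | ∃ c ∈ C, ∀ j, c j i = x j}

/-- Euclidean dual of a code over `R`. -/
def euclDualR {F : Type*} [Field F] {n : ℕ} (C : Set (Fin n → RR F)) :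
    Set (Fin n → RR F) :=
  {s | ∀ t ∈ C, ∑ j, t j * s j = 0}

/-- `l`-Galois dual of a code over `R`; apply with `pl = p ^ l`
(the `l`-Galois inner product is `[t,s]_l = ∑ j, t j * (s j) ^ (p ^ l)`,
since `F^l(r) = r ^ (p ^ l)`). -/
def galDualR {F : Type*} [Field F] {n : ℕ} (pl : ℕ) (C : Set (Fin n → RR F)) :
    Set (Fin n → RR F) :=
  {s | ∀ t ∈ C, ∑ j, t j * s j ^ pl = 0}

/-- `l`-Galois dual of a code over the field `F = F_q`; apply with `pl = p ^ l`. -/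
def galDualF {F : Type*} [Field F] {ι : Type*} [Fintype ι] (pl : ℕ) (D : Set (ι → F)) :
    Set (ι → F) :=
  {x | ∀ c ∈ D, ∑ j, c j * x j ^ pl = 0}

/-- Lee weight of a vector over `R`: the sum of the Hamming weights of the
quadruples of `γ`-components of the coordinates. -/
def leeWt {F : Type*} [Field F] [DecidableEq F] {n : ℕ} (c : Fin n → RR F) : ℕ :=
  ∑ j, hammingNorm (c j)

/-- Minimum Lee distance of a code over `R`. -/
noncomputable def dLee {F : Type*} [Field F] [DecidableEq F] {n : ℕ} (C : Set (Fin n → RR F)) : ℕ :=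
  sInf (leeWt '' {c ∈ C | c ≠ 0})

/-- Minimum Hamming distance of a code over `F_q`. -/
noncomputable def dHam {F : Type*} [Field F] [DecidableEq F] {ι : Type*} [Fintype ι]
    (D : Set (ι → F)) : ℕ :=
  sInf (hammingNorm '' {x ∈ D | x ≠ 0})

/-- The Gray map `ρ : R^n → F_q^{4n}`. -/
def gray {F : Type*} [Field F] {n : ℕ} (c : Fin n → RR F) : Fin n × Fin 4 → F :=
  fun ji => c ji.1 ji.2

/-- The code `C^α = {(α_1 c_1, …, α_n c_n) : c ∈ C}` over `R`. -/
def scaleCode {F : Type*} [Field F] {n : ℕ} (α : Fin n → RR F)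
    (C : Set (Fin n → RR F)) : Set (Fin n → RR F) :=
  (fun c => fun j => α j * c j) '' C

/-- The code `C^a = {(a_1 c_1, …, a_n c_n) : c ∈ C}` over `F_q`. -/
def scaleCodeF {F : Type*} [Field F] {n : ℕ} (a : Fin n → F)
    (D : Set (Fin n → F)) : Set (Fin n → F) :=
  (fun c => fun j => a j * c j) '' D

/-- `P_S`: the submatrix of `P` obtained by deleting the rows and columns
indexed by `S` (its determinant is `1` when `S` is everything, since the
empty matrix has determinant `1`). -/
def minorOff {F : Type*} [Field F] {m : ℕ} (P : Matrix (Fin m) (Fin m) F)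
    (S : Finset (Fin m)) : Matrix {i : Fin m // i ∉ S} {i : Fin m // i ∉ S} F :=
  P.submatrix (fun a => (a : Fin m)) (fun a => (a : Fin m))

section ComponentCodes

variable {F : Type*} [Field F] {n : ℕ}

theorem mem_compCode_iff_single_mem (C : Submodule (RR F) (Fin n → RR F)) (i : Fin 4)
    (x : Fin n → F) :
    x ∈ compCode (C : Set (Fin n → RR F)) i ↔ (fun j => (Pi.single i (x j) : RR F)) ∈ C := by
  constructor
  · rintro ⟨c, hc, hcx⟩
    have hsingle : (fun j => (Pi.single i (x j) : RR F)) = gam F i • c := by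
      funext j k
      by_cases hk : k = i
      · subst hk; simp [gam, hcx j]
      · simp [gam, Pi.single_eq_of_ne hk]
    rw [hsingle]
    exact C.smul_mem _ hc
  · exact fun h => ⟨_, h, fun j => by simp⟩

theorem mem_iff_forall_mem_compCode (C : Submodule (RR F) (Fin n → RR F))
    (c : Fin n → RR F) :
    c ∈ C ↔ ∀ i, (fun j => c j i) ∈ compCode (C : Set (Fin n → RR F)) i := by
  refine ⟨fun hc i => ⟨c, hc, fun j => rfl⟩, fun h => ?_⟩
  have hsum : c = ∑ i : Fin 4, fun j => (Pi.single i (c j i) : RR F) := by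
    funext j k
    simp [Finset.sum_apply]
  rw [hsum]
  exact C.sum_mem fun i _ => (mem_compCode_iff_single_mem C i _).1 (h i)

theorem mem_galDualR_iff (pl : ℕ) (C : Set (Fin n → RR F)) (s : Fin n → RR F) :
    s ∈ galDualR pl C ↔ ∀ i, (fun j => s j i) ∈ galDualF pl (compCode C i) := by
  constructor
  · rintro hs i x ⟨c, hc, hcx⟩
    simpa only [← hcx, Finset.sum_apply, Pi.mul_apply, Pi.pow_apply, Pi.zero_apply]
      using congrFun (hs c hc) i
  · intro hs t ht
    funext i
    simpa only [Finset.sum_apply, Pi.mul_apply, Pi.pow_apply, Pi.zero_apply]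
      using hs i (fun j => t j i) ⟨t, ht, fun j => rfl⟩

theorem zero_mem_galDualF {ι : Type*} [Fintype ι] {pl : ℕ} (hpl : pl ≠ 0)
    (D : Set (ι → F)) : 0 ∈ galDualF pl D := by
  intro c _
  simp [zero_pow hpl]

theorem single_mem_galDualR_iff {pl : ℕ} (hpl : pl ≠ 0) (C : Set (Fin n → RR F))
    (i : Fin 4) (x : Fin n → F) :
    (fun j => (Pi.single i (x j) : RR F)) ∈ galDualR pl C ↔ x ∈ galDualF pl (compCode C i) := by
  rw [mem_galDualR_iff]
  refine ⟨fun h => by simpa using h i, fun hx k => ?_⟩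
  by_cases hk : k = i
  · subst hk
    simpa using hx
  · convert zero_mem_galDualF hpl (compCode C k) using 1
    funext j
    simp [Pi.single_eq_of_ne hk]

end ComponentCodes

theorem statement7_general {p l n : ℕ} (hp : p.Prime)
    (F : Type*) [Field F]
    (C : Submodule (RR F) (Fin n → RR F)) :
    (C : Set (Fin n → RR F)) = galDualR (p ^ l) (C : Set (Fin n → RR F)) ↔
      ∀ i, compCode (C : Set (Fin n → RR F)) i =
        galDualF (p ^ l) (compCode (C : Set (Fin n → RR F)) i) := by
  have hpl : p ^ l ≠ 0 := pow_ne_zero _ hp.ne_zero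
  constructor
  · intro hC i
    ext x
    rw [mem_compCode_iff_single_mem, ← SetLike.mem_coe, Set.ext_iff.mp hC,
      single_mem_galDualR_iff hpl]
  · intro h
    ext s
    rw [SetLike.mem_coe, mem_iff_forall_mem_compCode, mem_galDualR_iff]
    exact forall_congr' fun i => by rw [← h i]

/-- `C` is `l`-Galois self-dual iff each `C_i` is. -/
theorem statement7 {p e l n : ℕ} (hp : p.Prime) (he : 0 < e) (hl : l < e)
    (F : Type*) [Field F] [Fintype F] (hcard : Fintype.card F = p ^ e)
    (C : Submodule (RR F) (Fin n → RR F)) :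
    (C : Set (Fin n → RR F)) = galDualR (p ^ l) (C : Set (Fin n → RR F)) ↔
      ∀ i, compCode (C : Set (Fin n → RR F)) i =
        galDualF (p ^ l) (compCode (C : Set (Fin n → RR F)) i) :=
  statement7_general hp F C
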